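/- arXiv:0711.0863 — 3 statements merged into one kernel-verified Lean document; each statement's English description precedes it below -/
import Mathlib

section
/- Let Ω ⊂ ℝ^N be an arbitrary domain and p ∈ [1,∞). Every bounded sequence (v_n) ⊂ L^p(Ω) has a subsequence (v_{k(n)}) such that the truncated sequence (η_n ∘ v_{k(n)}) does not concentrate in L^p(Ω), i.e., sup_{E ⊂ Ω, |E| ≤ δ} ∫_E |η_n(v_{k(n)}(x))|^p dx → 0 as δ → 0, uniformly in n ∈ ℕ. Here η_λ(t) = max(-λ, min(λ, t)) is scalar truncation at level λ. -/
/-!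
Write `u_m = |v_m|^p` and `α_m(j) = ∫_Ω min(u_m, j^p)`. Each `j ↦ α_m(j)` is nondecreasing with
values in `[0, C]`, so by compactness of `[0, C]^ℕ` a subsequence converges for every `j` to a
nondecreasing bounded, hence Cauchy, limit `a`; a faster subsequence `k` makes
`|α_{k(n)}(j) - a(j)| ≤ 1/(n+1)` for all `j ≤ n`. For `j ≤ n`,
`∫_E min(u, n^p) ≤ j^p |E| + (α(n) - α(j))`, because the excess `min(u, n^p) - min(u, j^p)` is
nonnegative. Along `k` the second term is close to `a(n) - a(j)`, small for one large `j` uniformly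
in `n ≥ j`; the first is then small once `|E|` is; and for `n < j` simply `∫_E ≤ j^p |E|`.
-/

open MeasureTheory Set Filter Topology
open scoped ENNReal

lemma abs_max_neg_min {c : ℝ} (hc : 0 ≤ c) (t : ℝ) : |max (-c) (min c t)| = min |t| c := by
  grind [abs_of_nonneg, abs_of_nonpos]

lemma Real.min_rpow {a b : ℝ} (ha : 0 ≤ a) (hb : 0 ≤ b) {p : ℝ} (hp : 0 ≤ p) :
    min a b ^ p = min (a ^ p) (b ^ p) := by
  rcases le_total a b with hab | hab
  · rw [min_eq_left hab, min_eq_left (Real.rpow_le_rpow ha hab hp)]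
  · rw [min_eq_right hab, min_eq_right (Real.rpow_le_rpow hb hab hp)]

section Diagonal

variable {α : ℕ → ℕ → ℝ} {C : ℝ}

lemma exists_strictMono_tendsto_of_mem_Icc (hα : ∀ m j, α m j ∈ Icc 0 C) :
    ∃ a : ℕ → ℝ, ∃ σ : ℕ → ℕ, StrictMono σ ∧
      ∀ j, Tendsto (fun m => α (σ m) j) atTop (𝓝 (a j)) := by
  obtain ⟨a, -, σ, hσ, hlim⟩ :=
    (isCompact_univ_pi fun _ : ℕ => isCompact_Icc (a := 0) (b := C)).tendsto_subseq
      (x := α) fun m j _ => hα m j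
  exact ⟨a, σ, hσ, tendsto_pi_nhds.1 hlim⟩

lemma exists_strictMono_abs_sub_le_of_tendsto {a : ℕ → ℝ}
    (hlim : ∀ j, Tendsto (fun m => α m j) atTop (𝓝 (a j))) :
    ∃ k : ℕ → ℕ, StrictMono k ∧ ∀ n, ∀ j ≤ n, |α (k n) j - a j| ≤ 1 / (n + 1) := by
  refine extraction_forall_of_eventually
    (P := fun n m => ∀ j ≤ n, |α m j - a j| ≤ 1 / (n + 1)) fun n => ?_
  have hpos : (0 : ℝ) < 1 / (n + 1) := by positivity
  filter_upwards [(eventually_all_finset (Finset.range (n + 1))).2 fun j _ =>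
    (hlim j).eventually (Metric.closedBall_mem_nhds (a j) hpos)] with m hm j hj
  simpa [Metric.mem_closedBall, Real.dist_eq] using hm j (Finset.mem_range_succ_iff.2 hj)

theorem exists_strictMono_uniform_increment_le (hmono : ∀ m, Monotone (α m))
    (hα : ∀ m j, α m j ∈ Icc 0 C) :
    ∃ k : ℕ → ℕ, StrictMono k ∧ ∀ ε > 0, ∃ j, ∀ n ≥ j, α (k n) n - α (k n) j ≤ ε := by
  obtain ⟨a, σ, hσ, hlim⟩ := exists_strictMono_tendsto_of_mem_Icc hα
  obtain ⟨ψ, hψ, hclose⟩ := exists_strictMono_abs_sub_le_of_tendsto hlim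
  refine ⟨σ ∘ ψ, hσ.comp hψ, fun ε hε => ?_⟩
  have ha_mono : Monotone a := fun i j hij =>
    le_of_tendsto_of_tendsto' (hlim i) (hlim j) fun m => hmono _ hij
  have ha_cauchy : CauchySeq a :=
    (tendsto_atTop_ciSup ha_mono ⟨C, by
      rintro _ ⟨j, rfl⟩
      exact le_of_tendsto' (hlim j) fun m => (hα _ j).2⟩).cauchySeq
  obtain ⟨j₁, hj₁⟩ := Metric.cauchySeq_iff'.1 ha_cauchy (ε / 2) (half_pos hε)
  obtain ⟨j₂, hj₂⟩ := eventually_atTop.1 <|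
    (tendsto_one_div_add_atTop_nhds_zero_nat (𝕜 := ℝ)).eventually
      (gt_mem_nhds (by positivity : 0 < ε / 4))
  refine ⟨max j₁ j₂, fun n hn => ?_⟩
  have hn₁ : dist (a n) (a j₁) < ε / 2 := hj₁ n (le_of_max_le_left hn)
  have hj : a j₁ ≤ a (max j₁ j₂) := ha_mono (le_max_left _ _)
  have hn₂ : 1 / ((n : ℝ) + 1) < ε / 4 := hj₂ n (le_of_max_le_right hn)
  have h₁ := abs_le.1 (hclose n n le_rfl)
  have h₂ := abs_le.1 (hclose n _ hn)
  rw [Real.dist_eq, abs_lt] at hn₁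
  simp only [Function.comp_apply]
  linarith [h₁.2, h₂.1]

end Diagonal

section Truncation

variable {X : Type*} [MeasurableSpace X] {μ : Measure X}

lemma integrable_min_const {u : X → ℝ} (hu : Integrable u μ) (hu0 : 0 ≤ u) {c : ℝ} (hc : 0 ≤ c) :
    Integrable (fun x => min (u x) c) μ :=
  hu.mono' (hu.aestronglyMeasurable.inf aestronglyMeasurable_const) <| ae_of_all _ fun x => by
    rw [Real.norm_eq_abs, abs_of_nonneg (le_min (hu0 x) hc)]
    exact min_le_left _ _

lemma setIntegral_min_const_le_mul {u : X → ℝ} (hu0 : 0 ≤ u) {c : ℝ} (hc : 0 ≤ c) {E : Set X}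
    (hE : μ E < ∞) : ∫ x in E, min (u x) c ∂μ ≤ c * μ.real E := by
  calc ∫ x in E, min (u x) c ∂μ ≤ ∫ x in E, c ∂μ :=
        integral_mono_of_nonneg (ae_of_all _ fun x => le_min (hu0 x) hc)
          (integrableOn_const hE.ne) (ae_of_all _ fun x => min_le_right _ _)
    _ = c * μ.real E := by rw [setIntegral_const, smul_eq_mul, mul_comm]

lemma setIntegral_min_const_le_mul_add {u : X → ℝ} (hu : Integrable u μ) (hu0 : 0 ≤ u)
    {c d : ℝ} (hc : 0 ≤ c) (hcd : c ≤ d) {E : Set X} (hE : μ E < ∞) :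
    ∫ x in E, min (u x) d ∂μ ≤
      c * μ.real E + (∫ x, min (u x) d ∂μ - ∫ x, min (u x) c ∂μ) := by
  have hd := integrable_min_const hu hu0 (hc.trans hcd)
  have hc' := integrable_min_const hu hu0 hc
  have hgain : 0 ≤ᵐ[μ] fun x => min (u x) d - min (u x) c :=
    ae_of_all _ fun x => sub_nonneg.2 (min_le_min_left _ hcd)
  calc ∫ x in E, min (u x) d ∂μ
        = ∫ x in E, min (u x) c ∂μ + ∫ x in E, (min (u x) d - min (u x) c) ∂μ := by
          rw [integral_sub hd.integrableOn hc'.integrableOn]; ring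
    _ ≤ c * μ.real E + ∫ x, (min (u x) d - min (u x) c) ∂μ :=
          add_le_add (setIntegral_min_const_le_mul hu0 hc hE)
            (setIntegral_le_integral (hd.sub hc') hgain)
    _ = c * μ.real E + (∫ x, min (u x) d ∂μ - ∫ x, min (u x) c ∂μ) := by
          rw [integral_sub hd hc']

theorem exists_strictMono_setIntegral_min_le {u : ℕ → X → ℝ} {C : ℝ}
    (hu : ∀ m, Integrable (u m) μ) (hu0 : ∀ m, 0 ≤ u m) (hC : ∀ m, ∫ x, u m x ∂μ ≤ C)
    {L : ℕ → ℝ} (hL : Monotone L) (hL0 : ∀ j, 0 ≤ L j) :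
    ∃ k : ℕ → ℕ, StrictMono k ∧ ∀ ε > 0, ∃ δ > 0, ∀ n, ∀ E : Set X,
      μ E ≤ ENNReal.ofReal δ → ∫ x in E, min (u (k n) x) (L n) ∂μ ≤ ε := by
  set α : ℕ → ℕ → ℝ := fun m j => ∫ x, min (u m x) (L j) ∂μ
  have hmono : ∀ m, Monotone (α m) := fun m i j hij =>
    integral_mono (integrable_min_const (hu m) (hu0 m) (hL0 i))
      (integrable_min_const (hu m) (hu0 m) (hL0 j)) fun x => min_le_min_left _ (hL hij)
  have hα : ∀ m j, α m j ∈ Icc 0 C := fun m j =>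
    ⟨integral_nonneg fun x => le_min (hu0 m x) (hL0 j),
      (integral_mono (integrable_min_const (hu m) (hu0 m) (hL0 j)) (hu m)
        fun x => min_le_left _ _).trans (hC m)⟩
  obtain ⟨k, hk, hincr⟩ := exists_strictMono_uniform_increment_le hmono hα
  refine ⟨k, hk, fun ε hε => ?_⟩
  obtain ⟨j, hj⟩ := hincr (ε / 2) (half_pos hε)
  have hL1 : 0 < L j + 1 := by linarith [hL0 j]
  refine ⟨ε / (2 * (L j + 1)), by positivity, fun n E hE => ?_⟩
  have hEfin : μ E < ∞ := hE.trans_lt ENNReal.ofReal_lt_top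
  have hsmall : L j * μ.real E ≤ ε / 2 := calc
    L j * μ.real E ≤ (L j + 1) * (ε / (2 * (L j + 1))) :=
      mul_le_mul (by linarith) (ENNReal.toReal_le_of_le_ofReal (by positivity) hE)
        measureReal_nonneg hL1.le
    _ = ε / 2 := by field_simp
  rcases le_total j n with hjn | hnj
  · calc ∫ x in E, min (u (k n) x) (L n) ∂μ ≤ L j * μ.real E + (α (k n) n - α (k n) j) :=
          setIntegral_min_const_le_mul_add (hu _) (hu0 _) (hL0 j) (hL hjn) hEfin
      _ ≤ ε := by linarith [hj n hjn]
  · calc ∫ x in E, min (u (k n) x) (L n) ∂μ ≤ L n * μ.real E :=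
          setIntegral_min_const_le_mul (hu0 _) (hL0 n) hEfin
      _ ≤ L j * μ.real E := mul_le_mul_of_nonneg_right (hL hnj) measureReal_nonneg
      _ ≤ ε := by linarith

end Truncation

theorem truncated_subsequence_does_not_concentrate_general {N : ℕ}
    (Ω : Set (EuclideanSpace ℝ (Fin N)))
    (p : ℝ) (hp : 1 ≤ p)
    (v : ℕ → EuclideanSpace ℝ (Fin N) → ℝ)
    (hint : ∀ n, Integrable (fun x => |v n x| ^ p) (volume.restrict Ω))
    (hbdd : ∃ C : ℝ, ∀ n, ∫ x in Ω, |v n x| ^ p ≤ C) :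
    ∃ k : ℕ → ℕ, StrictMono k ∧
      ∀ ε > (0:ℝ), ∃ δ > (0:ℝ), ∀ n : ℕ, ∀ E : Set (EuclideanSpace ℝ (Fin N)),
        E ⊆ Ω → MeasurableSet E → volume E ≤ ENNReal.ofReal δ →
        ∫ x in E, |max (-(n:ℝ)) (min (n:ℝ) (v (k n) x))| ^ p ≤ ε := by
  obtain ⟨C, hC⟩ := hbdd
  have hp0 : 0 ≤ p := by linarith
  obtain ⟨k, hk, hsmall⟩ := exists_strictMono_setIntegral_min_le hint
    (fun m x => by positivity) hC (L := fun n => (n : ℝ) ^ p)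
    (fun i j hij => Real.rpow_le_rpow (Nat.cast_nonneg i) (Nat.cast_le.2 hij) hp0)
    (fun j => by positivity)
  refine ⟨k, hk, fun ε hε => ?_⟩
  obtain ⟨δ, hδ, hδE⟩ := hsmall ε hε
  refine ⟨δ, hδ, fun n E hEΩ hE hEδ => ?_⟩
  have h := hδE n E (by rwa [Measure.restrict_apply hE, inter_eq_left.2 hEΩ])
  rw [Measure.restrict_restrict_of_subset hEΩ] at h
  simpa only [abs_max_neg_min (Nat.cast_nonneg n),
    Real.min_rpow (abs_nonneg _) (Nat.cast_nonneg _) hp0] using h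

/-- Every bounded sequence in `L^p(Ω)` has a subsequence whose truncations
`η_n ∘ v_{k(n)}` (truncation of the values at level `n`) do not concentrate in `L^p(Ω)`:
integrals over sets of small measure are small, uniformly in `n`. -/
theorem truncated_subsequence_does_not_concentrate {N : ℕ}
    (Ω : Set (EuclideanSpace ℝ (Fin N))) (hΩo : IsOpen Ω) (hΩc : IsConnected Ω)
    (p : ℝ) (hp : 1 ≤ p)
    (v : ℕ → EuclideanSpace ℝ (Fin N) → ℝ)
    (hmeas : ∀ n, AEStronglyMeasurable (v n) (volume.restrict Ω))
    (hint : ∀ n, Integrable (fun x => |v n x| ^ p) (volume.restrict Ω))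
    (hbdd : ∃ C : ℝ, ∀ n, ∫ x in Ω, |v n x| ^ p ≤ C) :
    ∃ k : ℕ → ℕ, StrictMono k ∧
      ∀ ε > (0:ℝ), ∃ δ > (0:ℝ), ∀ n : ℕ, ∀ E : Set (EuclideanSpace ℝ (Fin N)),
        E ⊆ Ω → MeasurableSet E → volume E ≤ ENNReal.ofReal δ →
        ∫ x in E, |max (-(n:ℝ)) (min (n:ℝ) (v (k n) x))| ^ p ≤ ε :=
  truncated_subsequence_does_not_concentrate_general Ω p hp v hint hbdd
end

section
/- Let Ω ⊂ ℝ^N be an unbounded domain and p ∈ [1,∞). Every bounded sequence (v_n) ⊂ L^p(Ω) has a subsequence (v_{k(n)}) such that sup_{E ⊂ Ω, |E| ≤ n} ∫_E min{δ, |v_{k(n)}(x)|^p} dx → 0 as δ → 0, uniformly in n ∈ ℕ. In particular, for any sequence of measurable sets E_n ⊂ Ω with |E_n| ≤ n, the sequence w_n := χ_{E_n} · v_{k(n)} does not spread out in L^p(Ω). -/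
/-!
Put `f n = |v n|^p` and `λₙ(r) = |{f n > 2⁻ʳ}|`. Since `Σ_r 2⁻ʳ λₙ(r) ≤ 2 ∫ f n` is bounded,
a diagonal subsequence makes every `λₙ(r)` converge to some `A r` with `Σ_r 2⁻ʳ A r < ∞`, and a
further subsequence `k` gives `λ_{k n}(r) ≤ A r + 2⁻ⁿ` for all `r ≤ 2n`. Slicing
`min {2⁻ⁱ, f}` into dyadic layers bounds `∫_E min {2⁻ⁱ, f (k n)}` by the tail `Σ_{r>i} 2⁻ʳ A r`
plus `2⁻ⁿ + 2⁻²ⁿ |E|`, and `2⁻²ⁿ |E| ≤ 2⁻²ⁿ n ≤ 2⁻ⁿ`; for the finitely many small `n` the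
trivial bound `2⁻ⁱ |E| ≤ 2⁻ⁱ n` is enough.
-/

open MeasureTheory Set Filter
open scoped ENNReal NNReal Topology

namespace Finset

variable {M : Type*} [AddCommMonoid M] [PartialOrder M] [IsOrderedAddMonoid M] {a b : ℕ → M}

theorem le_sum_Ico_add_of_le_add (h : ∀ r, a r ≤ b r + a (r + 1)) {i R : ℕ} (hiR : i ≤ R) :
    a i ≤ ∑ r ∈ Ico i R, b r + a R := by
  induction R, hiR using Nat.le_induction with
  | base => simp
  | succ R hiR ih =>
    rw [sum_Ico_succ_top hiR, add_assoc]
    exact ih.trans (by gcongr; exact h R)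

theorem sum_Ico_add_le_of_add_le (h : ∀ r, b r + a (r + 1) ≤ a r) {i R : ℕ} (hiR : i ≤ R) :
    ∑ r ∈ Ico i R, b r + a R ≤ a i :=
  le_sum_Ico_add_of_le_add (M := Mᵒᵈ) h hiR

end Finset

namespace ENNReal

theorem inv_two_pow_succ_add_self (r : ℕ) :
    (2⁻¹ : ℝ≥0∞) ^ (r + 1) + 2⁻¹ ^ (r + 1) = 2⁻¹ ^ r := by
  rw [pow_succ, ← mul_add, ENNReal.inv_two_add_inv_two, mul_one]

theorem inv_two_pow_succ_le (r : ℕ) : (2⁻¹ : ℝ≥0∞) ^ (r + 1) ≤ 2⁻¹ ^ r :=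
  le_self_add.trans (inv_two_pow_succ_add_self r).le

theorem sum_Ico_inv_two_pow_succ_le (i R : ℕ) :
    ∑ r ∈ Finset.Ico i R, (2⁻¹ : ℝ≥0∞) ^ (r + 1) ≤ 2⁻¹ ^ i := by
  rcases le_total i R with hiR | hRi
  · exact le_self_add.trans <| Finset.sum_Ico_add_le_of_add_le
      (fun r => (inv_two_pow_succ_add_self r).le) hiR
  · simp [Finset.Ico_eq_empty_of_le hRi]

theorem min_inv_two_pow_le (r : ℕ) (y : ℝ≥0∞) :
    min (2⁻¹ ^ r) y ≤ (Ioi (2⁻¹ ^ (r + 1))).indicator (fun _ => 2⁻¹ ^ (r + 1)) y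
      + min (2⁻¹ ^ (r + 1)) y := by
  by_cases hy : 2⁻¹ ^ (r + 1) < y
  · rw [indicator_of_mem (show y ∈ Ioi _ from hy), min_eq_left hy.le, inv_two_pow_succ_add_self]
    exact min_le_left _ _
  · rw [indicator_of_notMem (show y ∉ Ioi _ from hy), zero_add, min_eq_right (not_lt.1 hy)]
    exact min_le_right _ _

theorem indicator_add_two_mul_min_le (r : ℕ) (y : ℝ≥0∞) :
    (Ioi (2⁻¹ ^ r)).indicator (fun _ => 2⁻¹ ^ r) y + 2 * min (2⁻¹ ^ (r + 1)) y
      ≤ 2 * min (2⁻¹ ^ r) y := by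
  by_cases hy : 2⁻¹ ^ r < y
  · rw [indicator_of_mem (show y ∈ Ioi _ from hy), min_eq_left hy.le,
      min_eq_left ((inv_two_pow_succ_le r).trans hy.le), two_mul, two_mul,
      inv_two_pow_succ_add_self]
  · rw [indicator_of_notMem (show y ∉ Ioi _ from hy), zero_add]
    gcongr 2 * min ?_ y
    exact inv_two_pow_succ_le r

theorem tsum_le_of_tendsto_of_sum_range_le {u : ℕ → ℕ → ℝ≥0∞} {A : ℕ → ℝ≥0∞}
    {c : ℝ≥0∞} (hu : ∀ r, Tendsto (fun m => u m r) atTop (𝓝 (A r)))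
    (h : ∀ m R, ∑ r ∈ Finset.range R, u m r ≤ c) : ∑' r, A r ≤ c :=
  ENNReal.tsum_le_of_sum_range_le fun R =>
    le_of_tendsto' (tendsto_finsetSum _ fun r _ => hu r) fun m => h m R

theorem eventually_le_add_of_tendsto {ι : Type*} {l : Filter ι} {u : ι → ℝ≥0∞}
    {a η : ℝ≥0∞} (hu : Tendsto u l (𝓝 a)) (hη : η ≠ 0) : ∀ᶠ m in l, u m ≤ a + η := by
  rcases eq_or_ne a ∞ with rfl | ha
  · simp
  · exact (hu.eventually_lt_const (ENNReal.lt_add_right ha hη)).mono fun _ => le_of_lt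

theorem sum_Ico_succ_le_tsum (c : ℕ → ℝ≥0∞) (i R : ℕ) :
    ∑ r ∈ Finset.Ico i R, c (r + 1) ≤ ∑' j, c (j + (i + 1)) := by
  rw [Finset.sum_Ico_eq_sum_range]
  refine (Finset.sum_le_sum fun j _ => le_of_eq ?_).trans (ENNReal.sum_le_tsum _)
  rw [add_comm i j, add_assoc]

theorem inv_two_pow_mul_natCast_le_one (n : ℕ) : (2⁻¹ : ℝ≥0∞) ^ n * n ≤ 1 :=
  calc (2⁻¹ : ℝ≥0∞) ^ n * n ≤ 2⁻¹ ^ n * 2 ^ n := by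
        gcongr
        exact_mod_cast n.lt_two_pow_self.le
    _ = 1 := by rw [← mul_pow, ENNReal.inv_mul_cancel two_ne_zero ENNReal.ofNat_ne_top, one_pow]

end ENNReal

variable {α : Type*} [MeasurableSpace α] {μ : Measure α}

def superlevelMeasure (μ : Measure α) (f : α → ℝ≥0∞) (r : ℕ) : ℝ≥0∞ :=
  μ {x | 2⁻¹ ^ r < f x}

section

variable {f : α → ℝ≥0∞}

theorem aemeasurable_indicator_Ioi_comp (hf : AEMeasurable f μ) (c : ℝ≥0∞) :
    AEMeasurable (fun x => (Ioi c).indicator (fun _ => c) (f x)) μ :=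
  (measurable_const.indicator measurableSet_Ioi).comp_aemeasurable hf

theorem lintegral_indicator_Ioi_comp (hf : AEMeasurable f μ) (r : ℕ) :
    ∫⁻ x, (Ioi (2⁻¹ ^ r)).indicator (fun _ => 2⁻¹ ^ r) (f x) ∂μ
      = 2⁻¹ ^ r * superlevelMeasure μ f r :=
  lintegral_indicator_const₀ (hf.nullMeasurable measurableSet_Ioi) _

theorem lintegral_min_inv_two_pow_le (hf : AEMeasurable f μ) {i R : ℕ} (hiR : i ≤ R) :
    ∫⁻ x, min (2⁻¹ ^ i) (f x) ∂μ
      ≤ ∑ r ∈ Finset.Ico i R, 2⁻¹ ^ (r + 1) * superlevelMeasure μ f (r + 1) + 2⁻¹ ^ R * μ univ :=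
  calc ∫⁻ x, min (2⁻¹ ^ i) (f x) ∂μ
      ≤ ∫⁻ x, (∑ r ∈ Finset.Ico i R,
          (Ioi (2⁻¹ ^ (r + 1))).indicator (fun _ => 2⁻¹ ^ (r + 1)) (f x) + 2⁻¹ ^ R) ∂μ :=
        lintegral_mono fun x => (Finset.le_sum_Ico_add_of_le_add
          (fun r => ENNReal.min_inv_two_pow_le r (f x)) hiR).trans
            (by gcongr; exact min_le_left _ _)
    _ = _ := by
        rw [lintegral_add_right' _ aemeasurable_const, lintegral_const,
          lintegral_finsetSum' _ fun r _ => aemeasurable_indicator_Ioi_comp hf _]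
        simp only [lintegral_indicator_Ioi_comp hf]

theorem sum_inv_two_pow_mul_superlevelMeasure_le (hf : AEMeasurable f μ) (R : ℕ) :
    ∑ r ∈ Finset.range R, 2⁻¹ ^ r * superlevelMeasure μ f r ≤ 2 * ∫⁻ x, f x ∂μ :=
  calc ∑ r ∈ Finset.range R, 2⁻¹ ^ r * superlevelMeasure μ f r
      = ∫⁻ x, ∑ r ∈ Finset.range R, (Ioi (2⁻¹ ^ r)).indicator (fun _ => 2⁻¹ ^ r) (f x) ∂μ := by
        rw [lintegral_finsetSum' _ fun r _ => aemeasurable_indicator_Ioi_comp hf _]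
        simp only [lintegral_indicator_Ioi_comp hf]
    _ ≤ ∫⁻ x, 2 * f x ∂μ := lintegral_mono fun x => by
        rw [Finset.range_eq_Ico]
        refine le_self_add.trans <| (Finset.sum_Ico_add_le_of_add_le
          (fun r => ENNReal.indicator_add_two_mul_min_le r (f x)) (Nat.zero_le R)).trans ?_
        gcongr
        exact min_le_right _ _
    _ = 2 * ∫⁻ x, f x ∂μ := lintegral_const_mul' _ _ ENNReal.ofNat_ne_top

end

theorem exists_subseq_superlevelMeasure_le {f : ℕ → α → ℝ≥0∞} (hf : ∀ n, AEMeasurable (f n) μ)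
    {C : ℝ≥0∞} (hfC : ∀ n, ∫⁻ x, f n x ∂μ ≤ C) :
    ∃ k : ℕ → ℕ, StrictMono k ∧ ∃ A : ℕ → ℝ≥0∞, ∑' r, 2⁻¹ ^ r * A r ≤ 2 * C ∧
      ∀ n, ∀ r ≤ 2 * n, superlevelMeasure μ (f (k n)) r ≤ A r + 2⁻¹ ^ n := by
  obtain ⟨A, -, φ, hφ, hφA⟩ := isCompact_univ.tendsto_subseq
    (x := fun m r => superlevelMeasure μ (f m) r) fun _ => mem_univ _
  have hA : ∀ r, Tendsto (fun m => superlevelMeasure μ (f (φ m)) r) atTop (𝓝 (A r)) :=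
    tendsto_pi_nhds.1 hφA
  have hsum : ∑' r, 2⁻¹ ^ r * A r ≤ 2 * C :=
    ENNReal.tsum_le_of_tendsto_of_sum_range_le
      (fun r => ENNReal.Tendsto.const_mul (hA r) (Or.inr (by simp)))
      fun m R => (sum_inv_two_pow_mul_superlevelMeasure_le (hf _) R).trans (by gcongr; exact hfC _)
  obtain ⟨l, hl, hlA⟩ := extraction_forall_of_eventually fun n =>
    (eventually_all_finite (finite_Iic (2 * n))).2 fun r _ =>
      ENNReal.eventually_le_add_of_tendsto (η := 2⁻¹ ^ n) (hA r) (by simp)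
  exact ⟨φ ∘ l, hφ.comp hl, A, hsum, fun n r hr => hlA n r hr⟩

theorem setLIntegral_min_inv_two_pow_le {g : α → ℝ≥0∞} (hg : AEMeasurable g μ)
    {A : ℕ → ℝ≥0∞} {η : ℝ≥0∞} {i R : ℕ} (hiR : i ≤ R)
    (hgA : ∀ r ≤ R, superlevelMeasure μ g r ≤ A r + η) (E : Set α) :
    ∫⁻ x in E, min (2⁻¹ ^ i) (g x) ∂μ
      ≤ ∑' j, 2⁻¹ ^ (j + (i + 1)) * A (j + (i + 1)) + η + 2⁻¹ ^ R * μ E := by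
  have hsub : ∀ r ∈ Finset.Ico i R,
      superlevelMeasure (μ.restrict E) g (r + 1) ≤ A (r + 1) + η := fun r hr =>
    (Measure.restrict_apply_le _ _).trans (hgA _ (Finset.mem_Ico.1 hr).2)
  calc ∫⁻ x in E, min (2⁻¹ ^ i) (g x) ∂μ
      ≤ ∑ r ∈ Finset.Ico i R, 2⁻¹ ^ (r + 1) * superlevelMeasure (μ.restrict E) g (r + 1)
          + 2⁻¹ ^ R * μ.restrict E univ := lintegral_min_inv_two_pow_le hg.restrict hiR
    _ ≤ ∑ r ∈ Finset.Ico i R, 2⁻¹ ^ (r + 1) * A (r + 1)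
          + (∑ r ∈ Finset.Ico i R, 2⁻¹ ^ (r + 1)) * η + 2⁻¹ ^ R * μ E := by
        rw [Measure.restrict_apply_univ, Finset.sum_mul, ← Finset.sum_add_distrib]
        gcongr with r hr
        rw [← mul_add]
        gcongr
        exact hsub r hr
    _ ≤ ∑' j, 2⁻¹ ^ (j + (i + 1)) * A (j + (i + 1)) + η + 2⁻¹ ^ R * μ E := by
        gcongr
        · exact ENNReal.sum_Ico_succ_le_tsum (fun r => 2⁻¹ ^ r * A r) i R
        · exact mul_le_of_le_one_left (by positivity) <|
            (ENNReal.sum_Ico_inv_two_pow_succ_le i R).trans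
              (pow_le_one₀ (by positivity) (by norm_num))

theorem exists_uniform_setLIntegral_min_le {g : ℕ → α → ℝ≥0∞} (hg : ∀ n, AEMeasurable (g n) μ)
    {A : ℕ → ℝ≥0∞} (hA : ∑' r, 2⁻¹ ^ r * A r ≠ ∞)
    (hgA : ∀ n, ∀ r ≤ 2 * n, superlevelMeasure μ (g n) r ≤ A r + 2⁻¹ ^ n)
    {ε : ℝ≥0∞} (hε : 0 < ε) :
    ∃ δ : ℝ≥0, 0 < δ ∧ ∀ (n : ℕ) (E : Set α), μ E ≤ n →
      ∫⁻ x in E, min (δ : ℝ≥0∞) (g n x) ∂μ ≤ ε := by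
  set tail : ℕ → ℝ≥0∞ := fun i => ∑' j, 2⁻¹ ^ (j + (i + 1)) * A (j + (i + 1))
  have hε3 : 0 < ε / 3 := ENNReal.div_pos hε.ne' (by simp)
  have hpow : Tendsto (fun n => (2⁻¹ : ℝ≥0∞) ^ n) atTop (𝓝 0) :=
    ENNReal.tendsto_pow_atTop_nhds_zero_of_lt_one (by norm_num)
  have htail : Tendsto tail atTop (𝓝 0) :=
    (ENNReal.tendsto_sum_nat_add _ hA).comp (tendsto_add_atTop_nat 1)
  obtain ⟨N, hN⟩ := eventually_atTop.1 <|
    (htail.eventually_lt_const hε3).and (hpow.eventually_lt_const hε3)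
  have hpowN : Tendsto (fun i => (2⁻¹ : ℝ≥0∞) ^ i * N) atTop (𝓝 0) := by
    simpa using ENNReal.Tendsto.mul_const hpow (Or.inr (ENNReal.natCast_ne_top N))
  obtain ⟨i, hiN, hi⟩ := ((eventually_ge_atTop N).and (hpowN.eventually_lt_const hε)).exists
  refine ⟨2⁻¹ ^ i, by positivity, fun n E hE => ?_⟩
  rw [show ((2⁻¹ ^ i : ℝ≥0) : ℝ≥0∞) = 2⁻¹ ^ i by push_cast; rfl]
  rcases lt_or_ge n N with hn | hn
  · calc ∫⁻ x in E, min (2⁻¹ ^ i) (g n x) ∂μ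
        ≤ ∫⁻ x in E, 2⁻¹ ^ i ∂μ := lintegral_mono fun x => min_le_left _ _
      _ = 2⁻¹ ^ i * μ E := setLIntegral_const _ _
      _ ≤ 2⁻¹ ^ i * N := by gcongr; exact hE.trans (by exact_mod_cast hn.le)
      _ ≤ ε := hi.le
  -- Lowering `i` to `2 * n` only enlarges the integrand and brings the level bounds into range.
  · set i' := min i (2 * n)
    calc ∫⁻ x in E, min (2⁻¹ ^ i) (g n x) ∂μ
        ≤ ∫⁻ x in E, min (2⁻¹ ^ i') (g n x) ∂μ := lintegral_mono fun x =>
          min_le_min_right _ (pow_le_pow_of_le_one (by positivity) (by norm_num) (min_le_left _ _))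
      _ ≤ tail i' + 2⁻¹ ^ n + 2⁻¹ ^ (2 * n) * μ E :=
          setLIntegral_min_inv_two_pow_le (hg n) (min_le_right _ _) (hgA n) E
      _ ≤ ε / 3 + ε / 3 + ε / 3 := by
          gcongr
          · exact (hN i' (le_min hiN (by omega))).1.le
          · exact (hN n hn).2.le
          · calc 2⁻¹ ^ (2 * n) * μ E ≤ 2⁻¹ ^ n * (2⁻¹ ^ n * n) := by
                  rw [two_mul, pow_add, mul_assoc]; gcongr
              _ ≤ 2⁻¹ ^ n := mul_le_of_le_one_right (by positivity)
                  (ENNReal.inv_two_pow_mul_natCast_le_one n)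
              _ ≤ ε / 3 := (hN n hn).2.le
      _ = ε := ENNReal.add_thirds ε

theorem exists_subseq_uniform_setLIntegral_min_le {f : ℕ → α → ℝ≥0∞}
    (hf : ∀ n, AEMeasurable (f n) μ) {C : ℝ≥0∞} (hC : C ≠ ∞) (hfC : ∀ n, ∫⁻ x, f n x ∂μ ≤ C) :
    ∃ k : ℕ → ℕ, StrictMono k ∧ ∀ ε > 0, ∃ δ : ℝ≥0, 0 < δ ∧ ∀ (n : ℕ) (E : Set α), μ E ≤ n →
      ∫⁻ x in E, min (δ : ℝ≥0∞) (f (k n) x) ∂μ ≤ ε := by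
  obtain ⟨k, hk, A, hA, hkA⟩ := exists_subseq_superlevelMeasure_le hf hfC
  exact ⟨k, hk, fun ε hε => exists_uniform_setLIntegral_min_le (fun n => hf (k n))
    (ne_top_of_le_ne_top (ENNReal.mul_ne_top ENNReal.ofNat_ne_top hC) hA) hkA hε⟩

theorem integral_le_of_lintegral_ofReal_le {g : α → ℝ} (hg : 0 ≤ᵐ[μ] g) {ε : ℝ} (hε : 0 ≤ ε)
    (h : ∫⁻ x, ENNReal.ofReal (g x) ∂μ ≤ ENNReal.ofReal ε) : ∫ x, g x ∂μ ≤ ε := by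
  by_cases hgi : Integrable g μ
  · rw [← ENNReal.ofReal_le_ofReal_iff hε, ofReal_integral_eq_lintegral_ofReal hgi hg]
    exact h
  · rw [integral_undef hgi]
    exact hε

theorem setIntegral_min_abs_indicator_rpow {E Ω : Set α} (hE : MeasurableSet E) (hEΩ : E ⊆ Ω)
    (g : α → ℝ) {p δ : ℝ} (hp : p ≠ 0) (hδ : 0 ≤ δ) :
    ∫ x in Ω, min δ (|E.indicator g x| ^ p) ∂μ = ∫ x in E, min δ (|g x| ^ p) ∂μ := by
  have hind : (fun x => min δ (|E.indicator g x| ^ p)) = E.indicator fun x => min δ (|g x| ^ p) :=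
    (indicator_comp_of_zero (g := fun y : ℝ => min δ (|y| ^ p))
      (by simp [Real.zero_rpow hp, hδ])).symm
  rw [hind, integral_indicator hE, Measure.restrict_restrict hE, inter_eq_left.2 hEΩ]

theorem no_spread_subsequence_on_finite_measure_sets_general {N : ℕ}
    (Ω : Set (EuclideanSpace ℝ (Fin N)))
    (p : ℝ) (hp : 1 ≤ p)
    (v : ℕ → EuclideanSpace ℝ (Fin N) → ℝ)
    (hint : ∀ n, Integrable (fun x => |v n x| ^ p) (volume.restrict Ω))
    (hbdd : ∃ C : ℝ, ∀ n, ∫ x in Ω, |v n x| ^ p ≤ C) :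
    ∃ k : ℕ → ℕ, StrictMono k ∧
      (∀ ε > (0:ℝ), ∃ δ > (0:ℝ), ∀ n : ℕ, ∀ E : Set (EuclideanSpace ℝ (Fin N)),
        E ⊆ Ω → MeasurableSet E → volume E ≤ (n : ℝ≥0∞) →
        ∫ x in E, min δ (|v (k n) x| ^ p) ≤ ε) ∧
      (∀ E : ℕ → Set (EuclideanSpace ℝ (Fin N)),
        (∀ n, E n ⊆ Ω ∧ MeasurableSet (E n) ∧ volume (E n) ≤ (n : ℝ≥0∞)) →
        ∀ ε > (0:ℝ), ∃ δ > (0:ℝ), ∀ n : ℕ,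
          ∫ x in Ω, min δ (|Set.indicator (E n) (v (k n)) x| ^ p) ≤ ε) := by
  obtain ⟨C, hC⟩ := hbdd
  have hnonneg : ∀ n x, 0 ≤ |v n x| ^ p := fun n x => by positivity
  obtain ⟨k, hk, hsmall⟩ := exists_subseq_uniform_setLIntegral_min_le
    (f := fun n x => ENNReal.ofReal (|v n x| ^ p))
    (fun n => (hint n).1.aemeasurable.ennreal_ofReal) ENNReal.ofReal_ne_top fun n => by
      rw [← ofReal_integral_eq_lintegral_ofReal (hint n) (ae_of_all _ (hnonneg n))]
      exact ENNReal.ofReal_le_ofReal (hC n)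
  have hsetIntegral : ∀ ε > (0:ℝ), ∃ δ > (0:ℝ), ∀ n : ℕ, ∀ E : Set (EuclideanSpace ℝ (Fin N)),
      E ⊆ Ω → MeasurableSet E → volume E ≤ (n : ℝ≥0∞) →
      ∫ x in E, min δ (|v (k n) x| ^ p) ≤ ε := fun ε hε => by
    obtain ⟨δ, hδ, hδE⟩ := hsmall (ENNReal.ofReal ε) (ENNReal.ofReal_pos.2 hε)
    refine ⟨δ, hδ, fun n E hEΩ hE hEn => integral_le_of_lintegral_ofReal_le
      (ae_of_all _ fun x => le_min δ.2 (hnonneg _ x)) hε.le ?_⟩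
    have hEn' : volume.restrict Ω E ≤ n := by
      rwa [Measure.restrict_apply hE, inter_eq_left.2 hEΩ]
    simpa [Measure.restrict_restrict_of_subset hEΩ] using hδE n E hEn'
  refine ⟨k, hk, hsetIntegral, fun E hE ε hε => ?_⟩
  obtain ⟨δ, hδ, hδE⟩ := hsetIntegral ε hε
  refine ⟨δ, hδ, fun n => ?_⟩
  obtain ⟨hEΩ, hEm, hEn⟩ := hE n
  rw [setIntegral_min_abs_indicator_rpow hEm hEΩ _ (by linarith) hδ.le]
  exact hδE n (E n) hEΩ hEm hEn

/-- On an unbounded domain `Ω`, every bounded sequence in `L^p(Ω)` has a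
subsequence `v_{k(n)}` such that `sup_{|E| ≤ n} ∫_E min{δ, |v_{k(n)}|^p} dx → 0` as `δ → 0`,
uniformly in `n`; in particular, for any measurable sets `E_n ⊆ Ω` with `|E_n| ≤ n`, the
sequence `w_n := χ_{E_n} · v_{k(n)}` does not spread out in `L^p(Ω)`. -/
theorem no_spread_subsequence_on_finite_measure_sets {N : ℕ}
    (Ω : Set (EuclideanSpace ℝ (Fin N))) (hΩo : IsOpen Ω) (hΩc : IsConnected Ω)
    (hΩu : ¬ Bornology.IsBounded Ω)
    (p : ℝ) (hp : 1 ≤ p)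
    (v : ℕ → EuclideanSpace ℝ (Fin N) → ℝ)
    (hmeas : ∀ n, AEStronglyMeasurable (v n) (volume.restrict Ω))
    (hint : ∀ n, Integrable (fun x => |v n x| ^ p) (volume.restrict Ω))
    (hbdd : ∃ C : ℝ, ∀ n, ∫ x in Ω, |v n x| ^ p ≤ C) :
    ∃ k : ℕ → ℕ, StrictMono k ∧
      (∀ ε > (0:ℝ), ∃ δ > (0:ℝ), ∀ n : ℕ, ∀ E : Set (EuclideanSpace ℝ (Fin N)),
        E ⊆ Ω → MeasurableSet E → volume E ≤ (n : ℝ≥0∞) →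
        ∫ x in E, min δ (|v (k n) x| ^ p) ≤ ε) ∧
      (∀ E : ℕ → Set (EuclideanSpace ℝ (Fin N)),
        (∀ n, E n ⊆ Ω ∧ MeasurableSet (E n) ∧ volume (E n) ≤ (n : ℝ≥0∞)) →
        ∀ ε > (0:ℝ), ∃ δ > (0:ℝ), ∀ n : ℕ,
          ∫ x in Ω, min δ (|Set.indicator (E n) (v (k n)) x| ^ p) ≤ ε) :=
  no_spread_subsequence_on_finite_measure_sets_general Ω p hp v hint hbdd
end

section
/- Let p ∈ (N,∞), Ω ⊂ ℝ^N. Assume A_{αβ}, b satisfy the Carathéodory, growth (bounded by an increasing f of |μ|+|ξ|), affine-in-(μ,ξ) structure for b, and uniform equicontinuity assumptions. Then the Nemytskii operators Ã_{αβ}(u,U)(x) := A_{αβ}(x,u(x),U(x)) mapping X̃ := (L^p ∩ L^∞)(Ω;ℝ^M) × (L^p ∩ L^∞)(Ω;ℝ^{M×N}) into L^∞(Ω;ℝ^{M×M}), and b̃(u,U)(x) := b(x,u(x),U(x)) mapping X̃ into L^p(Ω;ℝ^M), are well defined, map bounded sets to bounded sets, and are uniformly continuous on bounded subsets of X̃.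 -/
open MeasureTheory Set Filter
open scoped ENNReal

/-!
`x ↦ G x (u x) (U x)` is measurable because `(u, U)` is an a.e. limit of simple functions and
each `G x` is continuous. An `L^∞` bound on `(u, U)` confines its values to a closed ball of the
finite-dimensional space `E₁ × E₂`; on this compact set the pointwise equicontinuous families
`(A x)`, `(b₀ x)`, `(Bc x)` are uniformly equicontinuous, which gives the `L^∞` estimates for
`Ã`. The affine structure `b x μ ξ = b₀ x μ ξ μ + Bc x μ ξ ξ + b x 0 0` bounds `b̃(u, U)`
pointwise by `K (‖u‖ + ‖U‖) + ‖b(·, 0, 0)‖`, and `b̃(u₁, U₁) - b̃(u₂, U₂)` by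
`η (‖u₁‖ + ‖U₁‖) + K (‖u₁ - u₂‖ + ‖U₁ - U₂‖)` with `η` small, which integrate to the `Lᵖ`
estimates.
-/

theorem aestronglyMeasurable_caratheodory_comp {α E F : Type*} [MeasurableSpace α]
    [TopologicalSpace E] [NormedAddCommGroup F] {μ : Measure α} {G : α → E → F}
    (hGm : ∀ m, AEStronglyMeasurable (fun x => G x m) μ) (hGc : ∀ᵐ x ∂μ, Continuous (G x))
    {w : α → E} (hw : AEStronglyMeasurable w μ) :
    AEStronglyMeasurable (fun x => G x (w x)) μ := by
  obtain ⟨w', hw'm, hww'⟩ := hw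
  have hsimple (φ : SimpleFunc α E) : AEStronglyMeasurable (fun x => G x (φ x)) μ := by
    have hφ : (fun x => G x (φ x)) = fun x => ∑ c ∈ φ.range, (φ ⁻¹' {c}).indicator (G · c) x := by
      funext x
      rw [Finset.sum_eq_single_of_mem (φ x) (φ.mem_range_self x)]
      · simp
      · intro c _ hc
        exact indicator_of_notMem (fun h => hc h.symm) _
    rw [hφ]
    exact Finset.aestronglyMeasurable_fun_sum _ fun c _ =>
      (hGm c).indicator (φ.measurableSet_fiber c)
  have hw' : AEStronglyMeasurable (fun x => G x (w' x)) μ := by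
    refine aestronglyMeasurable_of_tendsto_ae atTop (fun n => hsimple (hw'm.approx n)) ?_
    filter_upwards [hGc] with x hx
    exact (hx.tendsto (w' x)).comp (hw'm.tendsto_approx x)
  exact hw'.congr (by filter_upwards [hww'] with x hx; rw [hx])

section LpBounds

variable {α E F : Type*} [MeasurableSpace α] {μ : Measure α} [NormedAddCommGroup E]
  [NormedAddCommGroup F] {q : ℝ≥0∞}

theorem ae_norm_le_of_eLpNorm_top_le {f : α → F} {C : ℝ} (hC : 0 ≤ C)
    (h : eLpNorm f ∞ μ ≤ ENNReal.ofReal C) : ∀ᵐ x ∂μ, ‖f x‖ ≤ C := by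
  rw [eLpNorm_exponent_top] at h
  filter_upwards [ae_le_eLpNormEssSup (f := f) (μ := μ)] with x hx
  rw [← ENNReal.ofReal_le_ofReal_iff hC, ofReal_norm]
  exact hx.trans h

/-- Below `1` the `Lᵠ` quasi-norm only satisfies the triangle inequality up to the factor
`ENNReal.LpAddConst q`. -/
theorem eLpNorm_le_of_ae_norm_le_add {f : α → F} {φ ψ : α → ℝ}
    (hφ : AEStronglyMeasurable φ μ) (hψ : AEStronglyMeasurable ψ μ)
    (h : ∀ᵐ x ∂μ, ‖f x‖ ≤ φ x + ψ x) {a b : ℝ} (ha : 0 ≤ a) (hb : 0 ≤ b)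
    (hφa : eLpNorm φ q μ ≤ ENNReal.ofReal a) (hψb : eLpNorm ψ q μ ≤ ENNReal.ofReal b) :
    eLpNorm f q μ ≤ ENNReal.ofReal ((ENNReal.LpAddConst q).toReal * (a + b)) := by
  calc eLpNorm f q μ ≤ eLpNorm (φ + ψ) q μ := eLpNorm_mono_ae_real h
    _ ≤ ENNReal.LpAddConst q * (eLpNorm φ q μ + eLpNorm ψ q μ) := eLpNorm_add_le' hφ hψ q
    _ ≤ ENNReal.ofReal (ENNReal.LpAddConst q).toReal * (ENNReal.ofReal a + ENNReal.ofReal b) := by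
      rw [ENNReal.ofReal_toReal (ENNReal.LpAddConst_lt_top q).ne]
      gcongr
    _ = ENNReal.ofReal ((ENNReal.LpAddConst q).toReal * (a + b)) := by
      rw [ENNReal.ofReal_mul ENNReal.toReal_nonneg, ENNReal.ofReal_add ha hb]

theorem eLpNorm_const_mul_norm_le {v : α → E} {c a : ℝ} (hc : 0 ≤ c)
    (hv : eLpNorm v q μ ≤ ENNReal.ofReal a) :
    eLpNorm (fun x => c * ‖v x‖) q μ ≤ ENNReal.ofReal (c * a) := by
  calc eLpNorm (c • fun x => ‖v x‖) q μ ≤ ‖c‖ₑ * eLpNorm (fun x => ‖v x‖) q μ :=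
        eLpNorm_const_smul_le
    _ ≤ ENNReal.ofReal c * ENNReal.ofReal a := by
      rw [eLpNorm_norm, Real.enorm_eq_ofReal hc]
      gcongr
    _ = ENNReal.ofReal (c * a) := (ENNReal.ofReal_mul hc).symm

theorem eLpNorm_const_mul_norm_add_le {E' : Type*} [NormedAddCommGroup E'] {v : α → E}
    {w : α → E'} (hv : AEStronglyMeasurable v μ) (hw : AEStronglyMeasurable w μ) {c a : ℝ}
    (hc : 0 ≤ c) (ha : 0 ≤ a) (hva : eLpNorm v q μ ≤ ENNReal.ofReal a)
    (hwa : eLpNorm w q μ ≤ ENNReal.ofReal a) :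
    eLpNorm (fun x => c * ‖v x‖ + c * ‖w x‖) q μ ≤
      ENNReal.ofReal ((ENNReal.LpAddConst q).toReal * (c * a + c * a)) :=
  eLpNorm_le_of_ae_norm_le_add (hv.norm.const_mul c) (hw.norm.const_mul c)
    (ae_of_all _ fun x => (Real.norm_of_nonneg (by positivity)).le) (by positivity)
    (by positivity) (eLpNorm_const_mul_norm_le hc hva) (eLpNorm_const_mul_norm_le hc hwa)

end LpBounds

section LpInterLinfty

variable {α E₁ E₂ : Type*} [MeasurableSpace α] [NormedAddCommGroup E₁] [NormedAddCommGroup E₂]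

/-- The norm of `(u, U)` in `X̃ = (Lᵠ ∩ L^∞) × (Lᵠ ∩ L^∞)`. -/
noncomputable def lpInterLinftyNorm (q : ℝ≥0∞) (μ : Measure α) (u : α → E₁) (U : α → E₂) : ℝ≥0∞ :=
  eLpNorm u q μ + eLpNorm u ∞ μ + eLpNorm U q μ + eLpNorm U ∞ μ

theorem bounds_of_lpInterLinftyNorm_le {q : ℝ≥0∞} {μ : Measure α} {u : α → E₁} {U : α → E₂}
    {C : ℝ} (hC : 0 ≤ C) (h : lpInterLinftyNorm q μ u U ≤ ENNReal.ofReal C) :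
    eLpNorm u q μ ≤ ENNReal.ofReal C ∧ eLpNorm U q μ ≤ ENNReal.ofReal C ∧
      (∀ᵐ x ∂μ, ‖u x‖ ≤ C) ∧ ∀ᵐ x ∂μ, ‖U x‖ ≤ C := by
  unfold lpInterLinftyNorm at h
  refine ⟨le_trans ?_ h, le_trans ?_ h, ae_norm_le_of_eLpNorm_top_le hC (le_trans ?_ h),
    ae_norm_le_of_eLpNorm_top_le hC (le_trans ?_ h)⟩
  · exact le_add_right (le_add_right le_self_add)
  · exact le_add_right le_add_self
  · exact le_add_right (le_add_right le_add_self)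
  · exact le_add_self

theorem exists_lpInterLinftyNorm_le_of_memLp {q : ℝ≥0∞} {μ : Measure α} {u : α → E₁}
    {U : α → E₂} (hu : MemLp u q μ) (hu' : MemLp u ∞ μ) (hU : MemLp U q μ)
    (hU' : MemLp U ∞ μ) : ∃ C > 0, lpInterLinftyNorm q μ u U ≤ ENNReal.ofReal C := by
  have hfin : lpInterLinftyNorm q μ u U ≠ ∞ := by
    simp only [lpInterLinftyNorm, ne_eq, ENNReal.add_eq_top, not_or]
    exact ⟨⟨⟨hu.eLpNorm_ne_top, hu'.eLpNorm_ne_top⟩, hU.eLpNorm_ne_top⟩, hU'.eLpNorm_ne_top⟩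
  refine ⟨(lpInterLinftyNorm q μ u U).toReal + 1, ENNReal.toReal_nonneg.trans_lt (lt_add_one _), ?_⟩
  exact (ENNReal.ofReal_toReal hfin).ge.trans
    (ENNReal.ofReal_le_ofReal (le_add_of_nonneg_right zero_le_one))

end LpInterLinfty

theorem IsCompact.uniformEquicontinuousOn_of_equicontinuous {ι β α : Type*}
    [UniformSpace β] [UniformSpace α] {F : ι → β → α} {K : Set β} (hK : IsCompact K)
    (hF : Equicontinuous F) : UniformEquicontinuousOn F K := by
  rw [uniformEquicontinuousOn_iff_uniformContinuousOn]
  exact hK.uniformContinuousOn_of_continuous (equicontinuous_iff_continuous.1 hF).continuousOn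

theorem UniformEquicontinuousOn.exists_dist_lt {ι β α : Type*} [PseudoMetricSpace β]
    [PseudoMetricSpace α] {F : ι → β → α} {K : Set β} (hF : UniformEquicontinuousOn F K)
    {ε : ℝ} (hε : 0 < ε) :
    ∃ δ > 0, ∀ x ∈ K, ∀ y ∈ K, dist x y < δ → ∀ i, dist (F i x) (F i y) < ε := by
  obtain ⟨δ, hδ, h⟩ := (Metric.uniformity_basis_dist.inf_principal (K ×ˢ K)).eventually_iff.1
    (hF _ (Metric.dist_mem_uniformity hε))
  exact ⟨δ, hδ, fun x hx y hy hxy => h (x := (x, y)) ⟨hxy, hx, hy⟩⟩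

section Equicontinuity

variable {ι E₁ E₂ F : Type*} [NormedAddCommGroup E₁] [NormedAddCommGroup E₂]
  [NormedAddCommGroup F]

theorem equicontinuous_uncurry_of_norm_add_norm_lt {s : Set ι} {G : ι → E₁ → E₂ → F}
    (hG : ∀ μ₀ ξ₀, ∀ ε > (0:ℝ), ∃ δ > (0:ℝ), ∀ x ∈ s, ∀ μ ξ,
      ‖μ - μ₀‖ + ‖ξ - ξ₀‖ < δ → ‖G x μ ξ - G x μ₀ ξ₀‖ ≤ ε) :
    Equicontinuous fun (x : s) (m : E₁ × E₂) => G x m.1 m.2 := by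
  intro m₀
  refine Metric.equicontinuousAt_iff.2 fun ε hε => ?_
  obtain ⟨δ, hδ, h⟩ := hG m₀.1 m₀.2 (ε / 2) (half_pos hε)
  refine ⟨δ / 2, half_pos hδ, fun m hm x => ?_⟩
  have h1 : ‖m.1 - m₀.1‖ ≤ dist m m₀ := by simpa [dist_eq_norm] using norm_fst_le (m - m₀)
  have h2 : ‖m.2 - m₀.2‖ ≤ dist m m₀ := by simpa [dist_eq_norm] using norm_snd_le (m - m₀)
  rw [dist_comm, dist_eq_norm]
  exact (h x x.2 m.1 m.2 (by linarith)).trans_lt (half_lt_self hε)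

theorem Equicontinuous.exists_norm_sub_le_of_norm_le [ProperSpace E₁] [ProperSpace E₂]
    {G : ι → E₁ → E₂ → F} (hG : Equicontinuous fun i (m : E₁ × E₂) => G i m.1 m.2)
    (C : ℝ) {ε : ℝ} (hε : 0 < ε) :
    ∃ δ > 0, ∀ i μ₁ ξ₁ μ₂ ξ₂, ‖μ₁‖ ≤ C → ‖ξ₁‖ ≤ C → ‖μ₂‖ ≤ C → ‖ξ₂‖ ≤ C →
      ‖μ₁ - μ₂‖ ≤ δ → ‖ξ₁ - ξ₂‖ ≤ δ → ‖G i μ₁ ξ₁ - G i μ₂ ξ₂‖ ≤ ε := by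
  obtain ⟨δ, hδ, h⟩ :=
    ((isCompact_closedBall (0 : E₁ × E₂) C).uniformEquicontinuousOn_of_equicontinuous
      hG).exists_dist_lt hε
  refine ⟨δ / 2, half_pos hδ, fun i μ₁ ξ₁ μ₂ ξ₂ hμ₁ hξ₁ hμ₂ hξ₂ hμ hξ => ?_⟩
  have hball : ∀ {μ : E₁} {ξ : E₂}, ‖μ‖ ≤ C → ‖ξ‖ ≤ C → (μ, ξ) ∈ Metric.closedBall 0 C :=
    fun hμ hξ => mem_closedBall_zero_iff.2 (max_le hμ hξ)
  have hdist : dist (μ₁, ξ₁) (μ₂, ξ₂) < δ :=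
    (max_le (dist_eq_norm μ₁ μ₂ ▸ hμ) (dist_eq_norm ξ₁ ξ₂ ▸ hξ)).trans_lt (half_lt_self hδ)
  simpa [dist_eq_norm] using (h _ (hball hμ₁ hξ₁) _ (hball hμ₂ hξ₂) hdist i).le

end Equicontinuity

section Affine

variable {𝕜 E₁ E₂ F : Type*} [NontriviallyNormedField 𝕜] [NormedAddCommGroup E₁]
  [NormedSpace 𝕜 E₁] [NormedAddCommGroup E₂] [NormedSpace 𝕜 E₂] [NormedAddCommGroup F]
  [NormedSpace 𝕜 F]

theorem ContinuousLinearMap.norm_apply_add_apply_le (L : E₁ →L[𝕜] F) (B : E₂ →L[𝕜] F)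
    (m : E₁) (ξ : E₂) : ‖L m + B ξ‖ ≤ ‖L‖ * ‖m‖ + ‖B‖ * ‖ξ‖ :=
  (norm_add_le _ _).trans (add_le_add (L.le_opNorm m) (B.le_opNorm ξ))

theorem ContinuousLinearMap.norm_apply_add_apply_sub_le (L₁ L₂ : E₁ →L[𝕜] F)
    (B₁ B₂ : E₂ →L[𝕜] F) (m₁ m₂ : E₁) (ξ₁ ξ₂ : E₂) :
    ‖(L₁ m₁ + B₁ ξ₁) - (L₂ m₂ + B₂ ξ₂)‖ ≤
      ‖L₁ - L₂‖ * ‖m₁‖ + ‖B₁ - B₂‖ * ‖ξ₁‖ + (‖L₂‖ * ‖m₁ - m₂‖ + ‖B₂‖ * ‖ξ₁ - ξ₂‖) := by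
  have h : (L₁ m₁ + B₁ ξ₁) - (L₂ m₂ + B₂ ξ₂) =
      ((L₁ - L₂) m₁ + (B₁ - B₂) ξ₁) + (L₂ (m₁ - m₂) + B₂ (ξ₁ - ξ₂)) := by
    simp only [_root_.sub_apply, map_sub]
    abel
  rw [h]
  exact (norm_add_le _ _).trans (add_le_add (norm_apply_add_apply_le _ _ _ _)
    (norm_apply_add_apply_le _ _ _ _))

end Affine

section Nemytskii

variable {α E₁ E₂ F : Type*} [MeasurableSpace α] {μ : Measure α} {s : Set α}
  [NormedAddCommGroup E₁] [NormedAddCommGroup E₂] [NormedAddCommGroup F]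
  {f : ℝ → ℝ} {q : ℝ≥0∞} {C : ℝ}

theorem eLpNorm_top_nemytskii_le {G : α → E₁ → E₂ → F} (hf : Monotone f)
    (hG : ∀ x ∈ s, ∀ m ξ, ‖G x m ξ‖ ≤ f (‖m‖ + ‖ξ‖)) (hs : ∀ᵐ x ∂μ, x ∈ s) {u : α → E₁}
    {U : α → E₂} (hC : 0 ≤ C) (h : lpInterLinftyNorm q μ u U ≤ ENNReal.ofReal C) :
    eLpNorm (fun x => G x (u x) (U x)) ∞ μ ≤ ENNReal.ofReal (f (C + C)) := by
  obtain ⟨-, -, hu, hU⟩ := bounds_of_lpInterLinftyNorm_le hC h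
  rw [eLpNorm_exponent_top]
  refine eLpNormEssSup_le_of_ae_bound ?_
  filter_upwards [hs, hu, hU] with x hx hux hUx
  exact (hG x hx _ _).trans (hf (add_le_add hux hUx))

theorem exists_eLpNorm_top_nemytskii_sub_le [ProperSpace E₁] [ProperSpace E₂]
    {G : α → E₁ → E₂ → F}
    (hG : Equicontinuous fun (x : s) (m : E₁ × E₂) => G x m.1 m.2) (hs : ∀ᵐ x ∂μ, x ∈ s)
    (q : ℝ≥0∞) (hC : 0 ≤ C) {ε : ℝ} (hε : 0 < ε) :
    ∃ δ > 0, ∀ (u₁ u₂ : α → E₁) (U₁ U₂ : α → E₂),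
      lpInterLinftyNorm q μ u₁ U₁ ≤ ENNReal.ofReal C →
      lpInterLinftyNorm q μ u₂ U₂ ≤ ENNReal.ofReal C →
      lpInterLinftyNorm q μ (fun x => u₁ x - u₂ x) (fun x => U₁ x - U₂ x) ≤ ENNReal.ofReal δ →
      eLpNorm (fun x => G x (u₁ x) (U₁ x) - G x (u₂ x) (U₂ x)) ∞ μ ≤ ENNReal.ofReal ε := by
  obtain ⟨δ, hδ, hG⟩ := hG.exists_norm_sub_le_of_norm_le C hε
  refine ⟨δ, hδ, fun u₁ u₂ U₁ U₂ h₁ h₂ hΔ => ?_⟩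
  obtain ⟨-, -, hu₁, hU₁⟩ := bounds_of_lpInterLinftyNorm_le hC h₁
  obtain ⟨-, -, hu₂, hU₂⟩ := bounds_of_lpInterLinftyNorm_le hC h₂
  obtain ⟨-, -, hΔu, hΔU⟩ := bounds_of_lpInterLinftyNorm_le hδ.le hΔ
  rw [eLpNorm_exponent_top]
  refine eLpNormEssSup_le_of_ae_bound ?_
  filter_upwards [hs, hu₁, hU₁, hu₂, hU₂, hΔu, hΔU] with x hx h₁ h₂ h₃ h₄ h₅ h₆
  exact hG ⟨x, hx⟩ _ _ _ _ h₁ h₂ h₃ h₄ h₅ h₆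

section AffineNemytskii

variable [NormedSpace ℝ E₁] [NormedSpace ℝ E₂] [NormedSpace ℝ F]
  {b : α → E₁ → E₂ → F} {b₀ : α → E₁ → E₂ → (E₁ →L[ℝ] F)} {Bc : α → E₁ → E₂ → (E₂ →L[ℝ] F)}

theorem exists_eLpNorm_affine_nemytskii_le (hf : Monotone f)
    (hb₀g : ∀ x ∈ s, ∀ m ξ, ‖b₀ x m ξ‖ ≤ f (‖m‖ + ‖ξ‖))
    (hBcg : ∀ x ∈ s, ∀ m ξ, ‖Bc x m ξ‖ ≤ f (‖m‖ + ‖ξ‖))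
    (hb : ∀ x ∈ s, ∀ m ξ, b x m ξ = b₀ x m ξ m + Bc x m ξ ξ + b x 0 0)
    (hs : ∀ᵐ x ∂μ, x ∈ s) (hb00 : MemLp (fun x => b x 0 0) q μ) (hC : 0 ≤ C) :
    ∃ C' : ℝ, ∀ (u : α → E₁) (U : α → E₂), AEStronglyMeasurable u μ →
      AEStronglyMeasurable U μ → lpInterLinftyNorm q μ u U ≤ ENNReal.ofReal C →
      eLpNorm (fun x => b x (u x) (U x)) q μ ≤ ENNReal.ofReal C' := by
  set K := max (f (C + C)) 0
  refine ⟨(ENNReal.LpAddConst q).toReal * ((ENNReal.LpAddConst q).toReal * (K * C + K * C) +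
    (eLpNorm (fun x => b x 0 0) q μ).toReal), fun u U hu hU h => ?_⟩
  obtain ⟨huq, hUq, hu', hU'⟩ := bounds_of_lpInterLinftyNorm_le hC h
  have hpt : ∀ᵐ x ∂μ, ‖b x (u x) (U x)‖ ≤ (K * ‖u x‖ + K * ‖U x‖) + ‖b x 0 0‖ := by
    filter_upwards [hs, hu', hU'] with x hx hux hUx
    have hK : ∀ {L : ℝ}, L ≤ f (‖u x‖ + ‖U x‖) → L ≤ K :=
      fun hL => le_max_of_le_left (hL.trans (hf (add_le_add hux hUx)))
    rw [hb x hx]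
    refine (norm_add_le _ _).trans (add_le_add_left ?_ _)
    refine ((b₀ x (u x) (U x)).norm_apply_add_apply_le _ _ _).trans ?_
    gcongr
    exacts [hK (hb₀g x hx _ _), hK (hBcg x hx _ _)]
  exact eLpNorm_le_of_ae_norm_le_add ((hu.norm.const_mul K).add (hU.norm.const_mul K))
    hb00.1.norm hpt (by positivity) ENNReal.toReal_nonneg
    (eLpNorm_const_mul_norm_add_le hu hU (le_max_right _ _) hC huq hUq)
    (by rw [eLpNorm_norm, ENNReal.ofReal_toReal hb00.eLpNorm_ne_top])

theorem exists_eLpNorm_affine_nemytskii_sub_le [ProperSpace E₁] [ProperSpace E₂]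
    (hf : Monotone f) (hb₀g : ∀ x ∈ s, ∀ m ξ, ‖b₀ x m ξ‖ ≤ f (‖m‖ + ‖ξ‖))
    (hBcg : ∀ x ∈ s, ∀ m ξ, ‖Bc x m ξ‖ ≤ f (‖m‖ + ‖ξ‖))
    (hb : ∀ x ∈ s, ∀ m ξ, b x m ξ = b₀ x m ξ m + Bc x m ξ ξ + b x 0 0)
    (hb₀eq : Equicontinuous fun (x : s) (m : E₁ × E₂) => b₀ x m.1 m.2)
    (hBceq : Equicontinuous fun (x : s) (m : E₁ × E₂) => Bc x m.1 m.2)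
    (hs : ∀ᵐ x ∂μ, x ∈ s) (q : ℝ≥0∞) (hC : 0 ≤ C) {ε : ℝ} (hε : 0 < ε) :
    ∃ δ > 0, ∀ (u₁ u₂ : α → E₁) (U₁ U₂ : α → E₂),
      AEStronglyMeasurable u₁ μ → AEStronglyMeasurable u₂ μ →
      AEStronglyMeasurable U₁ μ → AEStronglyMeasurable U₂ μ →
      lpInterLinftyNorm q μ u₁ U₁ ≤ ENNReal.ofReal C →
      lpInterLinftyNorm q μ u₂ U₂ ≤ ENNReal.ofReal C →
      lpInterLinftyNorm q μ (fun x => u₁ x - u₂ x) (fun x => U₁ x - U₂ x) ≤ ENNReal.ofReal δ →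
      eLpNorm (fun x => b x (u₁ x) (U₁ x) - b x (u₂ x) (U₂ x)) q μ ≤ ENNReal.ofReal ε := by
  set T := (ENNReal.LpAddConst q).toReal
  set K := max (f (C + C)) 0
  -- `η` bounds the oscillation of `b₀` and `Bc`, `δ₁` the displacement of the arguments
  obtain ⟨η, hη, hηε⟩ := exists_pos_mul_lt (half_pos hε) (T * (T * (C + C)))
  obtain ⟨δ₁, hδ₁, hδ₁ε⟩ := exists_pos_mul_lt (half_pos hε) (T * (T * (K + K)))
  obtain ⟨δ₀, hδ₀, hb₀δ⟩ := hb₀eq.exists_norm_sub_le_of_norm_le C hη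
  obtain ⟨δB, hδB, hBcδ⟩ := hBceq.exists_norm_sub_le_of_norm_le C hη
  set δ := min δ₁ (min δ₀ δB)
  refine ⟨δ, by positivity, fun u₁ u₂ U₁ U₂ hu₁ hu₂ hU₁ hU₂ h₁ h₂ hΔ => ?_⟩
  obtain ⟨hu₁q, hU₁q, hu₁', hU₁'⟩ := bounds_of_lpInterLinftyNorm_le hC h₁
  obtain ⟨-, -, hu₂', hU₂'⟩ := bounds_of_lpInterLinftyNorm_le hC h₂
  obtain ⟨hΔuq, hΔUq, hΔu, hΔU⟩ := bounds_of_lpInterLinftyNorm_le (by positivity) hΔ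
  have hpt : ∀ᵐ x ∂μ, ‖b x (u₁ x) (U₁ x) - b x (u₂ x) (U₂ x)‖ ≤
      (η * ‖u₁ x‖ + η * ‖U₁ x‖) + (K * ‖u₁ x - u₂ x‖ + K * ‖U₁ x - U₂ x‖) := by
    filter_upwards [hs, hu₁', hU₁', hu₂', hU₂', hΔu, hΔU] with x hx h₁ h₂ h₃ h₄ h₅ h₆
    have hδ₀ : δ ≤ δ₀ := (min_le_right _ _).trans (min_le_left _ _)
    have hδB : δ ≤ δB := (min_le_right _ _).trans (min_le_right _ _)
    have hK : ∀ {L : ℝ}, L ≤ f (‖u₂ x‖ + ‖U₂ x‖) → L ≤ K :=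
      fun hL => le_max_of_le_left (hL.trans (hf (add_le_add h₃ h₄)))
    rw [hb x hx (u₁ x), hb x hx (u₂ x), add_sub_add_right_eq_sub]
    refine (ContinuousLinearMap.norm_apply_add_apply_sub_le _ _ _ _ _ _ _ _).trans ?_
    gcongr
    exacts [hb₀δ ⟨x, hx⟩ _ _ _ _ h₁ h₂ h₃ h₄ (h₅.trans hδ₀) (h₆.trans hδ₀),
      hBcδ ⟨x, hx⟩ _ _ _ _ h₁ h₂ h₃ h₄ (h₅.trans hδB) (h₆.trans hδB),
      hK (hb₀g x hx _ _), hK (hBcg x hx _ _)]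
  refine (eLpNorm_le_of_ae_norm_le_add (φ := fun x => η * ‖u₁ x‖ + η * ‖U₁ x‖)
    (ψ := fun x => K * ‖u₁ x - u₂ x‖ + K * ‖U₁ x - U₂ x‖)
    ((hu₁.norm.const_mul η).add (hU₁.norm.const_mul η))
    (((hu₁.sub hu₂).norm.const_mul K).add ((hU₁.sub hU₂).norm.const_mul K)) hpt
    (by positivity) (by positivity)
    (eLpNorm_const_mul_norm_add_le hu₁ hU₁ hη.le hC hu₁q hU₁q)
    (eLpNorm_const_mul_norm_add_le (hu₁.sub hu₂) (hU₁.sub hU₂) (le_max_right _ _)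
      (by positivity) hΔuq hΔUq)).trans (ENNReal.ofReal_le_ofReal ?_)
  have hδ : T * (T * (K + K)) * δ ≤ T * (T * (K + K)) * δ₁ :=
    mul_le_mul_of_nonneg_left (min_le_left _ _) (by positivity)
  linarith

end AffineNemytskii

end Nemytskii

theorem nemytskii_operators_W2p_setting_general {N M : ℕ}
    (Ω : Set (EuclideanSpace ℝ (Fin N))) (hΩo : IsOpen Ω)
    (p : ℝ)
    (A : EuclideanSpace ℝ (Fin N) → EuclideanSpace ℝ (Fin M) →
      (EuclideanSpace ℝ (Fin N) →L[ℝ] EuclideanSpace ℝ (Fin M)) →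
      (EuclideanSpace ℝ (Fin M) →L[ℝ] EuclideanSpace ℝ (Fin M)))
    (b : EuclideanSpace ℝ (Fin N) → EuclideanSpace ℝ (Fin M) →
      (EuclideanSpace ℝ (Fin N) →L[ℝ] EuclideanSpace ℝ (Fin M)) →
      EuclideanSpace ℝ (Fin M))
    (b₀ : EuclideanSpace ℝ (Fin N) → EuclideanSpace ℝ (Fin M) →
      (EuclideanSpace ℝ (Fin N) →L[ℝ] EuclideanSpace ℝ (Fin M)) →
      (EuclideanSpace ℝ (Fin M) →L[ℝ] EuclideanSpace ℝ (Fin M)))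
    (Bc : EuclideanSpace ℝ (Fin N) → EuclideanSpace ℝ (Fin M) →
      (EuclideanSpace ℝ (Fin N) →L[ℝ] EuclideanSpace ℝ (Fin M)) →
      ((EuclideanSpace ℝ (Fin N) →L[ℝ] EuclideanSpace ℝ (Fin M)) →L[ℝ]
        EuclideanSpace ℝ (Fin M)))
    (f : ℝ → ℝ) (hf : Monotone f)
    -- Carathéodory conditions
    (hAmeas : ∀ μ ξ, AEStronglyMeasurable (fun x => A x μ ξ) (volume.restrict Ω))
    (hAcont : ∀ᵐ x ∂(volume.restrict Ω), Continuous (fun m :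
      EuclideanSpace ℝ (Fin M) × (EuclideanSpace ℝ (Fin N) →L[ℝ] EuclideanSpace ℝ (Fin M))
      => A x m.1 m.2))
    (hbmeas : ∀ μ ξ, AEStronglyMeasurable (fun x => b x μ ξ) (volume.restrict Ω))
    (hbcont : ∀ᵐ x ∂(volume.restrict Ω), Continuous (fun m :
      EuclideanSpace ℝ (Fin M) × (EuclideanSpace ℝ (Fin N) →L[ℝ] EuclideanSpace ℝ (Fin M))
      => b x m.1 m.2))
    -- growth conditions
    (hAg : ∀ x ∈ Ω, ∀ μ ξ, ‖A x μ ξ‖ ≤ f (‖μ‖ + ‖ξ‖))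
    (hb₀g : ∀ x ∈ Ω, ∀ μ ξ, ‖b₀ x μ ξ‖ ≤ f (‖μ‖ + ‖ξ‖))
    (hBcg : ∀ x ∈ Ω, ∀ μ ξ, ‖Bc x μ ξ‖ ≤ f (‖μ‖ + ‖ξ‖))
    -- affine structure of b
    (hbstr : ∀ x ∈ Ω, ∀ μ ξ, b x μ ξ = b₀ x μ ξ μ + Bc x μ ξ ξ + b x 0 0)
    (hb00 : MemLp (fun x => b x 0 0) (ENNReal.ofReal p) (volume.restrict Ω))
    -- equicontinuity in (μ,ξ), uniform in x
    (hAeq : ∀ μ₀ ξ₀, ∀ ε > (0:ℝ), ∃ δ > (0:ℝ), ∀ x ∈ Ω, ∀ μ ξ,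
      ‖μ - μ₀‖ + ‖ξ - ξ₀‖ < δ → ‖A x μ ξ - A x μ₀ ξ₀‖ ≤ ε)
    (hb₀eq : ∀ μ₀ ξ₀, ∀ ε > (0:ℝ), ∃ δ > (0:ℝ), ∀ x ∈ Ω, ∀ μ ξ,
      ‖μ - μ₀‖ + ‖ξ - ξ₀‖ < δ → ‖b₀ x μ ξ - b₀ x μ₀ ξ₀‖ ≤ ε)
    (hBceq : ∀ μ₀ ξ₀, ∀ ε > (0:ℝ), ∃ δ > (0:ℝ), ∀ x ∈ Ω, ∀ μ ξ,
      ‖μ - μ₀‖ + ‖ξ - ξ₀‖ < δ → ‖Bc x μ ξ - Bc x μ₀ ξ₀‖ ≤ ε) :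
    -- well defined
    (∀ u U, MemLp u (ENNReal.ofReal p) (volume.restrict Ω) →
      MemLp u ⊤ (volume.restrict Ω) →
      MemLp U (ENNReal.ofReal p) (volume.restrict Ω) →
      MemLp U ⊤ (volume.restrict Ω) →
      MemLp (fun x => A x (u x) (U x)) ⊤ (volume.restrict Ω) ∧
      MemLp (fun x => b x (u x) (U x)) (ENNReal.ofReal p) (volume.restrict Ω)) ∧
    -- bounded sets to bounded sets
    (∀ C : ℝ, 0 < C → ∃ C' : ℝ, ∀ u U,
      MemLp u (ENNReal.ofReal p) (volume.restrict Ω) → MemLp u ⊤ (volume.restrict Ω) →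
      MemLp U (ENNReal.ofReal p) (volume.restrict Ω) → MemLp U ⊤ (volume.restrict Ω) →
      eLpNorm u (ENNReal.ofReal p) (volume.restrict Ω) +
        eLpNorm u ⊤ (volume.restrict Ω) +
        eLpNorm U (ENNReal.ofReal p) (volume.restrict Ω) +
        eLpNorm U ⊤ (volume.restrict Ω) ≤ ENNReal.ofReal C →
      eLpNorm (fun x => A x (u x) (U x)) ⊤ (volume.restrict Ω) ≤ ENNReal.ofReal C' ∧
      eLpNorm (fun x => b x (u x) (U x)) (ENNReal.ofReal p) (volume.restrict Ω) ≤
        ENNReal.ofReal C') ∧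
    -- uniform continuity on bounded sets
    (∀ C : ℝ, 0 < C → ∀ ε > (0:ℝ), ∃ δ > (0:ℝ), ∀ u₁ U₁ u₂ U₂,
      MemLp u₁ (ENNReal.ofReal p) (volume.restrict Ω) → MemLp u₁ ⊤ (volume.restrict Ω) →
      MemLp U₁ (ENNReal.ofReal p) (volume.restrict Ω) → MemLp U₁ ⊤ (volume.restrict Ω) →
      MemLp u₂ (ENNReal.ofReal p) (volume.restrict Ω) → MemLp u₂ ⊤ (volume.restrict Ω) →
      MemLp U₂ (ENNReal.ofReal p) (volume.restrict Ω) → MemLp U₂ ⊤ (volume.restrict Ω) →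
      eLpNorm u₁ (ENNReal.ofReal p) (volume.restrict Ω) +
        eLpNorm u₁ ⊤ (volume.restrict Ω) +
        eLpNorm U₁ (ENNReal.ofReal p) (volume.restrict Ω) +
        eLpNorm U₁ ⊤ (volume.restrict Ω) ≤ ENNReal.ofReal C →
      eLpNorm u₂ (ENNReal.ofReal p) (volume.restrict Ω) +
        eLpNorm u₂ ⊤ (volume.restrict Ω) +
        eLpNorm U₂ (ENNReal.ofReal p) (volume.restrict Ω) +
        eLpNorm U₂ ⊤ (volume.restrict Ω) ≤ ENNReal.ofReal C →
      eLpNorm (fun x => u₁ x - u₂ x) (ENNReal.ofReal p) (volume.restrict Ω) +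
        eLpNorm (fun x => u₁ x - u₂ x) ⊤ (volume.restrict Ω) +
        eLpNorm (fun x => U₁ x - U₂ x) (ENNReal.ofReal p) (volume.restrict Ω) +
        eLpNorm (fun x => U₁ x - U₂ x) ⊤ (volume.restrict Ω) ≤ ENNReal.ofReal δ →
      eLpNorm (fun x => A x (u₁ x) (U₁ x) - A x (u₂ x) (U₂ x)) ⊤
          (volume.restrict Ω) ≤ ENNReal.ofReal ε ∧
      eLpNorm (fun x => b x (u₁ x) (U₁ x) - b x (u₂ x) (U₂ x)) (ENNReal.ofReal p)
          (volume.restrict Ω) ≤ ENNReal.ofReal ε) := by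
  have hΩ : ∀ᵐ x ∂(volume.restrict Ω), x ∈ Ω := ae_restrict_mem hΩo.measurableSet
  refine ⟨fun u U hup hut hUp hUt => ?_, fun C hC => ?_, fun C hC ε hε => ?_⟩
  · obtain ⟨C, hC, h⟩ := exists_lpInterLinftyNorm_le_of_memLp hup hut hUp hUt
    obtain ⟨Cb, hCb⟩ := exists_eLpNorm_affine_nemytskii_le hf hb₀g hBcg hbstr hΩ hb00 hC.le
    have hm := hup.1.prodMk hUp.1
    exact ⟨⟨aestronglyMeasurable_caratheodory_comp (fun m => hAmeas m.1 m.2) hAcont hm,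
        (eLpNorm_top_nemytskii_le hf hAg hΩ hC.le h).trans_lt ENNReal.ofReal_lt_top⟩,
      ⟨aestronglyMeasurable_caratheodory_comp (fun m => hbmeas m.1 m.2) hbcont hm,
        (hCb u U hup.1 hUp.1 h).trans_lt ENNReal.ofReal_lt_top⟩⟩
  · obtain ⟨Cb, hCb⟩ := exists_eLpNorm_affine_nemytskii_le hf hb₀g hBcg hbstr hΩ hb00 hC.le
    refine ⟨max (f (C + C)) Cb, fun u U hup _ hUp _ h => ⟨?_, ?_⟩⟩
    · exact (eLpNorm_top_nemytskii_le hf hAg hΩ hC.le h).trans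
        (ENNReal.ofReal_le_ofReal (le_max_left _ _))
    · exact (hCb u U hup.1 hUp.1 h).trans (ENNReal.ofReal_le_ofReal (le_max_right _ _))
  · obtain ⟨δA, hδA, hA⟩ := exists_eLpNorm_top_nemytskii_sub_le
      (equicontinuous_uncurry_of_norm_add_norm_lt hAeq) hΩ (ENNReal.ofReal p) hC.le hε
    obtain ⟨δb, hδb, hb⟩ := exists_eLpNorm_affine_nemytskii_sub_le hf hb₀g hBcg hbstr
      (equicontinuous_uncurry_of_norm_add_norm_lt hb₀eq)
      (equicontinuous_uncurry_of_norm_add_norm_lt hBceq) hΩ (ENNReal.ofReal p) hC.le hε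
    refine ⟨min δA δb, lt_min hδA hδb,
      fun u₁ U₁ u₂ U₂ hu₁ _ hU₁ _ hu₂ _ hU₂ _ h₁ h₂ hΔ => ⟨?_, ?_⟩⟩
    · exact hA u₁ u₂ U₁ U₂ h₁ h₂ (hΔ.trans (ENNReal.ofReal_le_ofReal (min_le_left _ _)))
    · exact hb u₁ u₂ U₁ U₂ hu₁.1 hu₂.1 hU₁.1 hU₂.1 h₁ h₂
        (hΔ.trans (ENNReal.ofReal_le_ofReal (min_le_right _ _)))

/-- Under the Carathéodory, growth, affine-structure and uniform
equicontinuity assumptions on the coefficients `A` and `b`, the Nemytskii operators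
`Ã(u,U)(x) = A(x,u(x),U(x))` and `b̃(u,U)(x) = b(x,u(x),U(x))` map
`X̃ = (L^p ∩ L^∞)(Ω;ℝ^M) × (L^p ∩ L^∞)(Ω;ℝ^{M×N})` into `L^∞` resp. `L^p`; they are well
defined, map bounded sets onto bounded sets, and are uniformly continuous on bounded
subsets of `X̃`. -/
theorem nemytskii_operators_W2p_setting {N M : ℕ}
    (Ω : Set (EuclideanSpace ℝ (Fin N))) (hΩo : IsOpen Ω) (hΩc : IsConnected Ω)
    (p : ℝ) (hpN : (N:ℝ) < p)
    (A : EuclideanSpace ℝ (Fin N) → EuclideanSpace ℝ (Fin M) →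
      (EuclideanSpace ℝ (Fin N) →L[ℝ] EuclideanSpace ℝ (Fin M)) →
      (EuclideanSpace ℝ (Fin M) →L[ℝ] EuclideanSpace ℝ (Fin M)))
    (b : EuclideanSpace ℝ (Fin N) → EuclideanSpace ℝ (Fin M) →
      (EuclideanSpace ℝ (Fin N) →L[ℝ] EuclideanSpace ℝ (Fin M)) →
      EuclideanSpace ℝ (Fin M))
    (b₀ : EuclideanSpace ℝ (Fin N) → EuclideanSpace ℝ (Fin M) →
      (EuclideanSpace ℝ (Fin N) →L[ℝ] EuclideanSpace ℝ (Fin M)) →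
      (EuclideanSpace ℝ (Fin M) →L[ℝ] EuclideanSpace ℝ (Fin M)))
    (Bc : EuclideanSpace ℝ (Fin N) → EuclideanSpace ℝ (Fin M) →
      (EuclideanSpace ℝ (Fin N) →L[ℝ] EuclideanSpace ℝ (Fin M)) →
      ((EuclideanSpace ℝ (Fin N) →L[ℝ] EuclideanSpace ℝ (Fin M)) →L[ℝ]
        EuclideanSpace ℝ (Fin M)))
    (f : ℝ → ℝ) (hf : Monotone f) (hf1 : ∀ t, 1 ≤ f t)
    -- Carathéodory conditions
    (hAmeas : ∀ μ ξ, AEStronglyMeasurable (fun x => A x μ ξ) (volume.restrict Ω))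
    (hAcont : ∀ᵐ x ∂(volume.restrict Ω), Continuous (fun m :
      EuclideanSpace ℝ (Fin M) × (EuclideanSpace ℝ (Fin N) →L[ℝ] EuclideanSpace ℝ (Fin M))
      => A x m.1 m.2))
    (hbmeas : ∀ μ ξ, AEStronglyMeasurable (fun x => b x μ ξ) (volume.restrict Ω))
    (hbcont : ∀ᵐ x ∂(volume.restrict Ω), Continuous (fun m :
      EuclideanSpace ℝ (Fin M) × (EuclideanSpace ℝ (Fin N) →L[ℝ] EuclideanSpace ℝ (Fin M))
      => b x m.1 m.2))
    -- growth conditions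
    (hAg : ∀ x ∈ Ω, ∀ μ ξ, ‖A x μ ξ‖ ≤ f (‖μ‖ + ‖ξ‖))
    (hb₀g : ∀ x ∈ Ω, ∀ μ ξ, ‖b₀ x μ ξ‖ ≤ f (‖μ‖ + ‖ξ‖))
    (hBcg : ∀ x ∈ Ω, ∀ μ ξ, ‖Bc x μ ξ‖ ≤ f (‖μ‖ + ‖ξ‖))
    -- affine structure of b
    (hbstr : ∀ x ∈ Ω, ∀ μ ξ, b x μ ξ = b₀ x μ ξ μ + Bc x μ ξ ξ + b x 0 0)
    (hb00 : MemLp (fun x => b x 0 0) (ENNReal.ofReal p) (volume.restrict Ω))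
    -- equicontinuity in (μ,ξ), uniform in x
    (hAeq : ∀ μ₀ ξ₀, ∀ ε > (0:ℝ), ∃ δ > (0:ℝ), ∀ x ∈ Ω, ∀ μ ξ,
      ‖μ - μ₀‖ + ‖ξ - ξ₀‖ < δ → ‖A x μ ξ - A x μ₀ ξ₀‖ ≤ ε)
    (hb₀eq : ∀ μ₀ ξ₀, ∀ ε > (0:ℝ), ∃ δ > (0:ℝ), ∀ x ∈ Ω, ∀ μ ξ,
      ‖μ - μ₀‖ + ‖ξ - ξ₀‖ < δ → ‖b₀ x μ ξ - b₀ x μ₀ ξ₀‖ ≤ ε)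
    (hBceq : ∀ μ₀ ξ₀, ∀ ε > (0:ℝ), ∃ δ > (0:ℝ), ∀ x ∈ Ω, ∀ μ ξ,
      ‖μ - μ₀‖ + ‖ξ - ξ₀‖ < δ → ‖Bc x μ ξ - Bc x μ₀ ξ₀‖ ≤ ε) :
    -- well defined
    (∀ u U, MemLp u (ENNReal.ofReal p) (volume.restrict Ω) →
      MemLp u ⊤ (volume.restrict Ω) →
      MemLp U (ENNReal.ofReal p) (volume.restrict Ω) →
      MemLp U ⊤ (volume.restrict Ω) →
      MemLp (fun x => A x (u x) (U x)) ⊤ (volume.restrict Ω) ∧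
      MemLp (fun x => b x (u x) (U x)) (ENNReal.ofReal p) (volume.restrict Ω)) ∧
    -- bounded sets to bounded sets
    (∀ C : ℝ, 0 < C → ∃ C' : ℝ, ∀ u U,
      MemLp u (ENNReal.ofReal p) (volume.restrict Ω) → MemLp u ⊤ (volume.restrict Ω) →
      MemLp U (ENNReal.ofReal p) (volume.restrict Ω) → MemLp U ⊤ (volume.restrict Ω) →
      eLpNorm u (ENNReal.ofReal p) (volume.restrict Ω) +
        eLpNorm u ⊤ (volume.restrict Ω) +
        eLpNorm U (ENNReal.ofReal p) (volume.restrict Ω) +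
        eLpNorm U ⊤ (volume.restrict Ω) ≤ ENNReal.ofReal C →
      eLpNorm (fun x => A x (u x) (U x)) ⊤ (volume.restrict Ω) ≤ ENNReal.ofReal C' ∧
      eLpNorm (fun x => b x (u x) (U x)) (ENNReal.ofReal p) (volume.restrict Ω) ≤
        ENNReal.ofReal C') ∧
    -- uniform continuity on bounded sets
    (∀ C : ℝ, 0 < C → ∀ ε > (0:ℝ), ∃ δ > (0:ℝ), ∀ u₁ U₁ u₂ U₂,
      MemLp u₁ (ENNReal.ofReal p) (volume.restrict Ω) → MemLp u₁ ⊤ (volume.restrict Ω) →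
      MemLp U₁ (ENNReal.ofReal p) (volume.restrict Ω) → MemLp U₁ ⊤ (volume.restrict Ω) →
      MemLp u₂ (ENNReal.ofReal p) (volume.restrict Ω) → MemLp u₂ ⊤ (volume.restrict Ω) →
      MemLp U₂ (ENNReal.ofReal p) (volume.restrict Ω) → MemLp U₂ ⊤ (volume.restrict Ω) →
      eLpNorm u₁ (ENNReal.ofReal p) (volume.restrict Ω) +
        eLpNorm u₁ ⊤ (volume.restrict Ω) +
        eLpNorm U₁ (ENNReal.ofReal p) (volume.restrict Ω) +
        eLpNorm U₁ ⊤ (volume.restrict Ω) ≤ ENNReal.ofReal C →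
      eLpNorm u₂ (ENNReal.ofReal p) (volume.restrict Ω) +
        eLpNorm u₂ ⊤ (volume.restrict Ω) +
        eLpNorm U₂ (ENNReal.ofReal p) (volume.restrict Ω) +
        eLpNorm U₂ ⊤ (volume.restrict Ω) ≤ ENNReal.ofReal C →
      eLpNorm (fun x => u₁ x - u₂ x) (ENNReal.ofReal p) (volume.restrict Ω) +
        eLpNorm (fun x => u₁ x - u₂ x) ⊤ (volume.restrict Ω) +
        eLpNorm (fun x => U₁ x - U₂ x) (ENNReal.ofReal p) (volume.restrict Ω) +
        eLpNorm (fun x => U₁ x - U₂ x) ⊤ (volume.restrict Ω) ≤ ENNReal.ofReal δ →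
      eLpNorm (fun x => A x (u₁ x) (U₁ x) - A x (u₂ x) (U₂ x)) ⊤
          (volume.restrict Ω) ≤ ENNReal.ofReal ε ∧
      eLpNorm (fun x => b x (u₁ x) (U₁ x) - b x (u₂ x) (U₂ x)) (ENNReal.ofReal p)
          (volume.restrict Ω) ≤ ENNReal.ofReal ε) :=
  nemytskii_operators_W2p_setting_general Ω hΩo p A b b₀ Bc f hf hAmeas hAcont hbmeas hbcont hAg
    hb₀g hBcg hbstr hb00 hAeq hb₀eq hBceq
end
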